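/- arXiv:2203.16779 — 2 statements merged into one kernel-verified Lean document; each statement's English description precedes it below -/
import Mathlib

section
/- Let H be a real Hilbert space and L : ℝⁿ → B(H) a linear map into the bounded self-adjoint operators that is monotonically decreasing with respect to the componentwise order on ℝⁿ and the Loewner order on B(H) (i.e., d ≥ d̃ implies L(d) ⪯ L(d̃)). Let D be a diagonal matrix with positive diagonal entries δ₁,…,δ_n, and suppose that for some λ > 0 and all j ∈ {1,…,n} the operator L(D((n-1)e_j' − e_j)) has a vector g with ⟨g, L(D((n-1)e_j' − e_j)) g⟩ ≥ λ‖g‖². Then for every d ∈ ℝⁿ: if sup_{‖g‖=1} ⟨g, L(d) g⟩ < λ‖D⁻¹d‖_∞/(n-1), then min_j (d_j/δ_j) > -(1/(n-1))·max_j (d_j/δ_j). -/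
/-!
Let `x j = d j / δ j` and suppose `min x ≤ -(max x)/(n-1)`. With `j` a minimiser and
`c = -x j ≥ 0`, every `|x i|` is at most `(n-1) c`, and `d ≤ c • D((n-1)e_j' - e_j)` componentwise.
Monotonicity and linearity of `L` then give `⟨g, L(d) g⟩ ≥ c λ ‖g‖²` for the vector `g` attached
to `j`, so the supremum of the quadratic form of `L(d)` is at least `c λ ≥ λ ‖D⁻¹d‖_∞/(n-1)`.
-/

open scoped InnerProductSpace
open Finset

section Extremes

variable {ι : Type*} [Fintype ι] (hne : (univ : Finset ι).Nonempty) {k : ℝ} (hk : 1 ≤ k)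
  {x : ι → ℝ} (hx : univ.inf' hne x ≤ -(1 / k) * univ.sup' hne x)
include hk hx

theorem sup'_le_mul_neg_inf' : univ.sup' hne x ≤ k * -univ.inf' hne x := by
  have hk0 : 0 < k := by linarith
  rw [neg_mul, one_div, ← div_eq_inv_mul, le_neg, div_le_iff₀ hk0] at hx
  linarith

theorem neg_inf'_nonneg : 0 ≤ -univ.inf' hne x := by
  have ⟨i, _⟩ := hne
  have := (univ.inf'_le x (mem_univ i)).trans (univ.le_sup' x (mem_univ i))
  nlinarith [sup'_le_mul_neg_inf' hne hk hx]

theorem abs_le_mul_neg_inf' (i : ι) : |x i| ≤ k * -univ.inf' hne x := by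
  have hc := neg_inf'_nonneg hne hk hx
  rw [abs_le]
  constructor
  · nlinarith [univ.inf'_le x (mem_univ i)]
  · exact (univ.le_sup' x (mem_univ i)).trans (sup'_le_mul_neg_inf' hne hk hx)

end Extremes

/-- The paper's `D (k e_j' - e_j)`. -/
def tiltVector {ι : Type*} [DecidableEq ι] (δ : ι → ℝ) (k : ℝ) (j : ι) : ι → ℝ :=
  fun i => δ i * (k * (if i = j then 0 else 1) - (if i = j then 1 else 0))

theorem le_smul_tiltVector {ι : Type*} [DecidableEq ι] {δ d : ι → ℝ} (hδ : ∀ i, 0 < δ i)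
    {k c : ℝ} {j : ι} (hj : d j / δ j = -c) (hle : ∀ i, d i / δ i ≤ k * c) :
    d ≤ c • tiltVector δ k j := by
  intro i
  simp only [Pi.smul_apply, smul_eq_mul, tiltVector]
  by_cases h : i = j
  · subst h
    rw [div_eq_iff (hδ i).ne'] at hj
    simp only [if_true]
    linarith
  · have := (div_le_iff₀ (hδ i)).mp (hle i)
    simp only [if_neg h]
    linarith

section Rayleigh

variable {H : Type*} [NormedAddCommGroup H] [InnerProductSpace ℝ H]

theorem bddAbove_inner_self_sphere (T : H →L[ℝ] H) :
    BddAbove {r : ℝ | ∃ g : H, ‖g‖ = 1 ∧ r = ⟪g, T g⟫_ℝ} := by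
  refine ⟨‖T‖, ?_⟩
  rintro r ⟨g, hg, rfl⟩
  calc ⟪g, T g⟫_ℝ ≤ ‖g‖ * ‖T g‖ := real_inner_le_norm _ _
    _ ≤ ‖g‖ * (‖T‖ * ‖g‖) := by gcongr; exact T.le_opNorm g
    _ = ‖T‖ := by rw [hg]; ring

theorem le_sSup_inner_self_sphere (T : H →L[ℝ] H) {a : ℝ} {g : H} (hg : g ≠ 0)
    (hga : a * ‖g‖ ^ 2 ≤ ⟪g, T g⟫_ℝ) :
    a ≤ sSup {r : ℝ | ∃ g : H, ‖g‖ = 1 ∧ r = ⟪g, T g⟫_ℝ} := by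
  have hpos : 0 < ‖g‖ := norm_pos_iff.mpr hg
  refine le_csSup_of_le (bddAbove_inner_self_sphere T) ⟨‖g‖⁻¹ • g, norm_smul_inv_norm hg, rfl⟩ ?_
  rw [map_smul, real_inner_smul_left, real_inner_smul_right, ← mul_assoc, ← sq,
    inv_pow, inv_mul_eq_div, le_div_iff₀ (by positivity)]
  exact hga

end Rayleigh

theorem stmt2_general (n : ℕ) (hn : 2 ≤ n) {H : Type*} [NormedAddCommGroup H]
    [InnerProductSpace ℝ H]
    (hne : (Finset.univ : Finset (Fin n)).Nonempty)
    (L : (Fin n → ℝ) →ₗ[ℝ] (H →L[ℝ] H))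
    (hmono : ∀ d d' : Fin n → ℝ, d' ≤ d → ∀ g : H, ⟪g, (L d) g⟫_ℝ ≤ ⟪g, (L d') g⟫_ℝ)
    (δ : Fin n → ℝ) (hδ : ∀ j, 0 < δ j)
    (lam : ℝ) (hlam : 0 < lam)
    (hdef : ∀ j : Fin n, ∃ g : H, g ≠ 0 ∧
      lam * ‖g‖ ^ 2 ≤ ⟪g, (L (fun i => δ i *
        ((n - 1 : ℝ) * (if i = j then 0 else 1) - (if i = j then 1 else 0)))) g⟫_ℝ) :
    ∀ d : Fin n → ℝ,
      sSup {r : ℝ | ∃ g : H, ‖g‖ = 1 ∧ r = ⟪g, (L d) g⟫_ℝ} <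
        lam * (Finset.univ.sup' hne fun j => |d j| / δ j) / (n - 1 : ℝ) →
      -(1 / (n - 1 : ℝ)) * Finset.univ.sup' hne (fun j => d j / δ j) <
        Finset.univ.inf' hne (fun j => d j / δ j) := by
  intro d hsup
  by_contra! hmin
  have hk : (1 : ℝ) ≤ n - 1 := by
    have : (2 : ℝ) ≤ n := by exact_mod_cast hn
    linarith
  obtain ⟨j, -, hj⟩ := exists_mem_eq_inf' hne fun j => d j / δ j
  set c := -univ.inf' hne fun j => d j / δ j
  have hc : 0 ≤ c := neg_inf'_nonneg hne hk hmin
  have hbound := abs_le_mul_neg_inf' hne hk hmin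
  have hsup_abs : (univ.sup' hne fun j => |d j| / δ j) ≤ (n - 1) * c :=
    sup'_le _ _ fun i _ => by
      rw [← abs_of_pos (hδ i), ← abs_div]; exact hbound i
  have hdom : d ≤ c • tiltVector δ (n - 1) j :=
    le_smul_tiltVector hδ (by rw [← hj]; ring) fun i => (le_abs_self _).trans (hbound i)
  obtain ⟨g, hg, hgv⟩ := hdef j
  have hcl : c * lam ≤ sSup {r : ℝ | ∃ g : H, ‖g‖ = 1 ∧ r = ⟪g, (L d) g⟫_ℝ} := by
    refine le_sSup_inner_self_sphere (L d) hg ?_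
    calc c * lam * ‖g‖ ^ 2 ≤ c * ⟪g, L (tiltVector δ (n - 1) j) g⟫_ℝ := by
          rw [mul_assoc]; exact mul_le_mul_of_nonneg_left hgv hc
      _ = ⟪g, L (c • tiltVector δ (n - 1) j) g⟫_ℝ := by
          rw [map_smul, smul_apply, real_inner_smul_right]
      _ ≤ ⟪g, L d g⟫_ℝ := hmono _ _ hdom g
  have hlam_le : lam * (univ.sup' hne fun j => |d j| / δ j) / (n - 1) ≤ c * lam := by
    rw [div_le_iff₀ (by linarith)]
    nlinarith
  linarith

theorem stmt2 (n : ℕ) (hn : 2 ≤ n) {H : Type*} [NormedAddCommGroup H]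
    [InnerProductSpace ℝ H] [CompleteSpace H]
    (hne : (Finset.univ : Finset (Fin n)).Nonempty)
    (L : (Fin n → ℝ) →ₗ[ℝ] (H →L[ℝ] H))
    (hsa : ∀ d : Fin n → ℝ, IsSelfAdjoint (L d))
    (hmono : ∀ d d' : Fin n → ℝ, d' ≤ d → ∀ g : H, ⟪g, (L d) g⟫_ℝ ≤ ⟪g, (L d') g⟫_ℝ)
    (δ : Fin n → ℝ) (hδ : ∀ j, 0 < δ j)
    (lam : ℝ) (hlam : 0 < lam)
    (hdef : ∀ j : Fin n, ∃ g : H, g ≠ 0 ∧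
      lam * ‖g‖ ^ 2 ≤ ⟪g, (L (fun i => δ i *
        ((n - 1 : ℝ) * (if i = j then 0 else 1) - (if i = j then 1 else 0)))) g⟫_ℝ) :
    ∀ d : Fin n → ℝ,
      sSup {r : ℝ | ∃ g : H, ‖g‖ = 1 ∧ r = ⟪g, (L d) g⟫_ℝ} <
        lam * (Finset.univ.sup' hne fun j => |d j| / δ j) / (n - 1 : ℝ) →
      -(1 / (n - 1 : ℝ)) * Finset.univ.sup' hne (fun j => d j / δ j) <
        Finset.univ.inf' hne (fun j => d j / δ j) :=
  stmt2_general n hn hne L hmono δ hδ lam hlam hdef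
end

section
/- Let L : ℝⁿ → S_m be a linear map into the real symmetric m×m matrices that is monotonically decreasing (d ≥ d̃ implies L(d) ⪯ L(d̃) in the Loewner order), let D = diag(δ₁,…,δ_n) with δ_j > 0, and suppose λ := min_{j=1,…,n} λ_max(L(D((n-1)e_j' − e_j))) > 0. Then for every d ∈ ℝⁿ with λ_max(L(d)) < λ‖D⁻¹d‖_∞/(n-1), one has min_j (d_j/δ_j) > -(1/(n-1))·max_j (d_j/δ_j). -/
/-!
Suppose the conclusion fails and let `j` attain `α = min_i d_i/δ_i`. Then `α ≤ 0`, every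
`d_i/δ_i` lies in `[α, (n-1)(-α)]`, hence `d ≤ (-α) D((n-1)e_j' - e_j)` and
`‖D⁻¹d‖_∞ ≤ (n-1)(-α)`. Since `L` is antitone and `λ_max` is monotone and positively
homogeneous, `λ_max(L d) ≥ (-α) λ ≥ λ‖D⁻¹d‖_∞/(n-1)`, contradicting the hypothesis on `d`.
-/

open Matrix

/-- The largest eigenvalue of a symmetric matrix, as the supremum of the
quadratic form over unit vectors. -/
noncomputable def lamMax {m : ℕ} (A : Matrix (Fin m) (Fin m) ℝ) : ℝ :=
  sSup {r : ℝ | ∃ x : Fin m → ℝ, x ⬝ᵥ x = 1 ∧ r = x ⬝ᵥ A.mulVec x}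

section lamMax

variable {m : ℕ}

lemma lamMax_eq_iSup (A : Matrix (Fin m) (Fin m) ℝ) :
    lamMax A = ⨆ x : {x : Fin m → ℝ // x ⬝ᵥ x = 1}, x.1 ⬝ᵥ A *ᵥ x.1 := by
  rw [lamMax, iSup]
  congr 1
  ext r
  simp [eq_comm]

lemma abs_le_one_of_dotProduct_self_eq_one {x : Fin m → ℝ} (hx : x ⬝ᵥ x = 1) (i : Fin m) :
    |x i| ≤ 1 := by
  rw [← sq_le_one_iff_abs_le_one, ← hx, sq]
  exact Finset.single_le_sum (f := fun j => x j * x j) (fun j _ => mul_self_nonneg _)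
    (Finset.mem_univ i)

lemma bddAbove_range_dotProduct_mulVec_unit (A : Matrix (Fin m) (Fin m) ℝ) :
    BddAbove (Set.range fun x : {x : Fin m → ℝ // x ⬝ᵥ x = 1} => x.1 ⬝ᵥ A *ᵥ x.1) := by
  refine (((isCompact_closedBall (0 : Fin m → ℝ) 1).image
    (f := fun x => x ⬝ᵥ A *ᵥ x) (by fun_prop)).bddAbove).mono ?_
  rintro _ ⟨x, rfl⟩
  refine ⟨x.1, ?_, rfl⟩
  rw [mem_closedBall_zero_iff, pi_norm_le_iff_of_nonneg zero_le_one]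
  exact fun i => (Real.norm_eq_abs _).trans_le (abs_le_one_of_dotProduct_self_eq_one x.2 i)

lemma lamMax_le_lamMax {A B : Matrix (Fin m) (Fin m) ℝ} (h : (B - A).PosSemidef) :
    lamMax A ≤ lamMax B := by
  rw [lamMax_eq_iSup, lamMax_eq_iSup]
  refine ciSup_mono (bddAbove_range_dotProduct_mulVec_unit B) fun x => ?_
  simpa only [star_trivial, sub_mulVec, dotProduct_sub, sub_nonneg] using
    h.dotProduct_mulVec_nonneg x.1

lemma lamMax_smul {c : ℝ} (hc : 0 ≤ c) (A : Matrix (Fin m) (Fin m) ℝ) :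
    lamMax (c • A) = c * lamMax A := by
  simp only [lamMax_eq_iSup, Real.mul_iSup_of_nonneg hc, smul_mulVec, dotProduct_smul,
    smul_eq_mul]

end lamMax

section cornerDirection

variable {ι : Type*} [DecidableEq ι]

/-- The vector `D (k e_j' - e_j)` with `D = diag δ`, `e_j' = 𝟙 - e_j`. -/
def cornerDirection (k : ℝ) (δ : ι → ℝ) (j : ι) : ι → ℝ :=
  fun i => δ i * (k * (if i = j then 0 else 1) - (if i = j then 1 else 0))

lemma le_smul_cornerDirection {k c : ℝ} {δ d : ι → ℝ} (hδ : ∀ i, 0 < δ i) {j : ι}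
    (hj : d j / δ j = -c) (hle : ∀ i, d i / δ i ≤ k * c) :
    d ≤ c • cornerDirection k δ j := by
  intro i
  have hdi := (div_le_iff₀ (hδ i)).1 (hle i)
  by_cases hij : i = j
  · subst hij
    simp [cornerDirection, (div_eq_iff (hδ i).ne').1 hj]
  · simp only [cornerDirection, hij, Pi.smul_apply, smul_eq_mul, if_false]
    linarith

end cornerDirection

lemma sup'_abs_div_le {ι : Type*} {s : Finset ι} (hs : s.Nonempty) {k c : ℝ} (hk : 1 ≤ k)
    {δ d : ι → ℝ} (hδ : ∀ i, 0 < δ i) (hlow : ∀ i, -c ≤ d i / δ i)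
    (hup : ∀ i, d i / δ i ≤ k * c) :
    s.sup' hs (fun i => |d i| / δ i) ≤ k * c := by
  refine Finset.sup'_le hs _ fun i _ => ?_
  have hc : 0 ≤ c := by nlinarith [hlow i, hup i]
  rw [← abs_of_pos (hδ i), ← abs_div, abs_le]
  constructor <;> nlinarith [hlow i, hup i]

theorem stmt3_general (n m : ℕ) (hn : 2 ≤ n)
    (hne : (Finset.univ : Finset (Fin n)).Nonempty)
    (L : (Fin n → ℝ) →ₗ[ℝ] Matrix (Fin m) (Fin m) ℝ)
    (hmono : ∀ d d' : Fin n → ℝ, d' ≤ d → (L d' - L d).PosSemidef)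
    (δ : Fin n → ℝ) (hδ : ∀ j, 0 < δ j)
    (lam : ℝ)
    (hlam : lam = Finset.univ.inf' hne fun j : Fin n =>
      lamMax (L (fun i => δ i *
        ((n - 1 : ℝ) * (if i = j then 0 else 1) - (if i = j then 1 else 0)))))
    (hlampos : 0 < lam) :
    ∀ d : Fin n → ℝ,
      lamMax (L d) < lam * (Finset.univ.sup' hne fun j => |d j| / δ j) / (n - 1 : ℝ) →
      -(1 / (n - 1 : ℝ)) * Finset.univ.sup' hne (fun j => d j / δ j) <
        Finset.univ.inf' hne (fun j => d j / δ j) := by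
  intro d hd
  have hk : (1 : ℝ) ≤ n - 1 := by
    have : (2 : ℝ) ≤ n := by exact_mod_cast hn
    linarith
  by_contra hcon
  obtain ⟨j, -, hj⟩ := Finset.exists_mem_eq_inf' hne (fun j => d j / δ j)
  set α := Finset.univ.inf' hne (fun j => d j / δ j)
  set β := Finset.univ.sup' hne (fun j => d j / δ j)
  have hβ : β ≤ (n - 1) * -α := by
    rw [not_lt, neg_mul, one_div_mul_eq_div, le_neg, div_le_iff₀ (by linarith)] at hcon
    linarith
  have hlow : ∀ i, α ≤ d i / δ i := fun i => Finset.inf'_le _ (Finset.mem_univ i)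
  have hup : ∀ i, d i / δ i ≤ (n - 1) * -α := fun i =>
    (Finset.le_sup' (fun j => d j / δ j) (Finset.mem_univ i)).trans hβ
  have hα : 0 ≤ -α := by nlinarith [hlow j, hup j]
  have hlam_le : lam ≤ lamMax (L (cornerDirection (n - 1) δ j)) :=
    hlam ▸ Finset.inf'_le _ (Finset.mem_univ j)
  have hlower : -α * lam ≤ lamMax (L d) := calc
    -α * lam ≤ -α * lamMax (L (cornerDirection (n - 1) δ j)) := by gcongr
    _ = lamMax (L (-α • cornerDirection (n - 1) δ j)) := by rw [map_smul, lamMax_smul hα]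
    _ ≤ lamMax (L d) := lamMax_le_lamMax <| hmono _ _ <|
      le_smul_cornerDirection hδ (by rw [neg_neg, hj]) hup
  have hupper : lam * (Finset.univ.sup' hne fun j => |d j| / δ j) / (n - 1 : ℝ) ≤ -α * lam := by
    rw [div_le_iff₀ (by linarith)]
    nlinarith [sup'_abs_div_le hne hk hδ (by simpa using hlow) hup]
  linarith

theorem stmt3 (n m : ℕ) (hn : 2 ≤ n)
    (hne : (Finset.univ : Finset (Fin n)).Nonempty)
    (L : (Fin n → ℝ) →ₗ[ℝ] Matrix (Fin m) (Fin m) ℝ)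
    (hsym : ∀ d : Fin n → ℝ, (L d).IsHermitian)
    (hmono : ∀ d d' : Fin n → ℝ, d' ≤ d → (L d' - L d).PosSemidef)
    (δ : Fin n → ℝ) (hδ : ∀ j, 0 < δ j)
    (lam : ℝ)
    (hlam : lam = Finset.univ.inf' hne fun j : Fin n =>
      lamMax (L (fun i => δ i *
        ((n - 1 : ℝ) * (if i = j then 0 else 1) - (if i = j then 1 else 0)))))
    (hlampos : 0 < lam) :
    ∀ d : Fin n → ℝ,
      lamMax (L d) < lam * (Finset.univ.sup' hne fun j => |d j| / δ j) / (n - 1 : ℝ) →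
      -(1 / (n - 1 : ℝ)) * Finset.univ.sup' hne (fun j => d j / δ j) <
        Finset.univ.inf' hne (fun j => d j / δ j) :=
  stmt3_general n m hn hne L hmono δ hδ lam hlam hlampos
end
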